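/- arXiv:2301.07172 — 3 statements merged into one kernel-verified Lean document; each statement's English description precedes it below -/
import Mathlib

section
/- Let m ≥ 1. Then the m-th eigenvalue of the integral operator T_{𝕂,ρ} satisfies λ_{m,ρ} ≤ Σ_{j≥m} λ_j ‖φ_j‖²_ρ, where ‖φ_j‖²_ρ = ∫_X φ_j(y)² dρ(y). -/
/-!
Min–max argument. Some `f ≠ 0` in the span of `ψ 0, …, ψ m` is `L²(ρ)`-orthogonal to
`φ 0, …, φ (m - 1)` (`m + 1` unknowns, `m` linear conditions). On that span the quadratic form
`⟨T_{K,ρ} f, f⟩_ρ` is at least `λ_{m,ρ} ‖f‖²_ρ`. On the other hand, integrating the Mercer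
expansion term by term gives `⟨T_{K,ρ} f, f⟩_ρ = Σ_j λ_j ⟨φ_j, f⟩_ρ²`, whose terms with `j < m`
vanish and whose other terms are at most `λ_j ‖φ_j‖²_ρ ‖f‖²_ρ` by Cauchy–Schwarz.
-/

open MeasureTheory

theorem Matrix.exists_mulVec_eq_zero_of_card_lt {K m n : Type*} [Field K] [Fintype m]
    [Fintype n] (A : Matrix m n K) (h : Fintype.card m < Fintype.card n) :
    ∃ v ≠ 0, A.mulVec v = 0 := by
  have hker : LinearMap.ker A.mulVecLin ≠ ⊥ :=
    LinearMap.ker_ne_bot_of_finrank_lt (by simpa using h)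
  obtain ⟨v, hv, hv0⟩ := (Submodule.ne_bot_iff _).mp hker
  exact ⟨v, hv0, hv⟩

section Integrals

variable {α : Type*} [MeasurableSpace α] {μ : Measure α}

theorem sq_integral_mul_le_integral_sq_mul_integral_sq {g h : α → ℝ}
    (hg : MemLp g 2 μ) (hh : MemLp h 2 μ) :
    (∫ x, g x * h x ∂μ) ^ 2 ≤ (∫ x, g x ^ 2 ∂μ) * ∫ x, h x ^ 2 ∂μ := by
  have hgh : Integrable (fun x => g x * h x) μ := hg.integrable_mul hh
  have hquad : ∀ t : ℝ, 0 ≤ (∫ x, h x ^ 2 ∂μ) * (t * t) + 2 * (∫ x, g x * h x ∂μ) * t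
      + ∫ x, g x ^ 2 ∂μ := by
    intro t
    calc 0 ≤ ∫ x, (g x + t * h x) ^ 2 ∂μ := integral_nonneg fun x => sq_nonneg _
      _ = ∫ x, (t * t) * h x ^ 2 + (2 * t) * (g x * h x) + g x ^ 2 ∂μ :=
          integral_congr_ae (ae_of_all _ fun x => by ring)
      _ = _ := by
          rw [integral_add (f := fun x => (t * t) * h x ^ 2 + (2 * t) * (g x * h x))
              ((hh.integrable_sq.const_mul _).add (hgh.const_mul _)) hg.integrable_sq,
            integral_add (hh.integrable_sq.const_mul _) (hgh.const_mul _),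
            integral_const_mul, integral_const_mul]
          ring
  have hdiscr := discrim_le_zero hquad
  rw [discrim] at hdiscr
  linarith

theorem hasSum_integral_of_nonneg {ι : Type*} [Countable ι] {F : ι → α → ℝ} {f : α → ℝ}
    (hF : ∀ n, AEStronglyMeasurable (F n) μ) (hF0 : ∀ n, 0 ≤ᵐ[μ] F n) (hf : Integrable f μ)
    (hFf : ∀ᵐ x ∂μ, HasSum (fun n => F n x) (f x)) :
    HasSum (fun n => ∫ x, F n x ∂μ) (∫ x, f x ∂μ) :=
  hasSum_integral_of_dominated_convergence F hF
    (fun n => (hF0 n).mono fun _ hx => (Real.norm_of_nonneg hx).le)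
    (hFf.mono fun _ hx => hx.summable) (hf.congr (hFf.mono fun _ hx => hx.tsum_eq.symm)) hFf

theorem integral_mul_sum_mul {ι : Type*} {g : α → ℝ} {ψ : ι → α → ℝ} (s : Finset ι)
    (v : ι → ℝ) (hgψ : ∀ i ∈ s, Integrable (fun x => g x * ψ i x) μ) :
    ∫ x, g x * ∑ i ∈ s, v i * ψ i x ∂μ = ∑ i ∈ s, v i * ∫ x, g x * ψ i x ∂μ := by
  simp_rw [Finset.mul_sum, mul_left_comm (g _)]
  rw [integral_finsetSum s fun i hi => (hgψ i hi).const_mul (v i)]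
  simp_rw [integral_const_mul]

theorem exists_ne_zero_forall_integral_mul_sum_eq_zero {ι κ : Type*} [Fintype ι] [Fintype κ]
    {φ : κ → α → ℝ} {ψ : ι → α → ℝ} (hφ : ∀ j, MemLp (φ j) 2 μ) (hψ : ∀ i, MemLp (ψ i) 2 μ)
    (hcard : Fintype.card κ < Fintype.card ι) :
    ∃ a : ι → ℝ, a ≠ 0 ∧ ∀ j, ∫ x, φ j x * ∑ i, a i * ψ i x ∂μ = 0 := by
  obtain ⟨a, ha0, ha⟩ := Matrix.exists_mulVec_eq_zero_of_card_lt
    (Matrix.of fun j i => ∫ x, φ j x * ψ i x ∂μ) hcard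
  refine ⟨a, ha0, fun j => ?_⟩
  rw [integral_mul_sum_mul _ _ fun i _ => (hφ j).integrable_mul (hψ i)]
  simpa [Matrix.mulVec, dotProduct, mul_comm] using congrFun ha j

section Orthonormal

variable {ι : Type*} [Fintype ι] [DecidableEq ι] {ψ : ι → α → ℝ}

theorem integral_sum_mul_sum_of_orthonormal (hψ : ∀ i, MemLp (ψ i) 2 μ)
    (hψorth : ∀ i j, ∫ x, ψ i x * ψ j x ∂μ = if i = j then 1 else 0) (v w : ι → ℝ) :
    ∫ x, (∑ i, v i * ψ i x) * (∑ i, w i * ψ i x) ∂μ = ∑ i, v i * w i := by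
  have hv : MemLp (fun x => ∑ i, v i * ψ i x) 2 μ :=
    memLp_finsetSum _ fun i _ => (hψ i).const_mul (v i)
  rw [integral_mul_sum_mul _ _ fun i _ => hv.integrable_mul (hψ i)]
  refine Finset.sum_congr rfl fun i _ => ?_
  simp_rw [mul_comm _ (ψ i _)]
  rw [integral_mul_sum_mul _ _ fun k _ => (hψ i).integrable_mul (hψ k)]
  simp [hψorth, mul_comm]

theorem integral_sq_sum_of_orthonormal (hψ : ∀ i, MemLp (ψ i) 2 μ)
    (hψorth : ∀ i j, ∫ x, ψ i x * ψ j x ∂μ = if i = j then 1 else 0) (a : ι → ℝ) :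
    ∫ x, (∑ i, a i * ψ i x) ^ 2 ∂μ = ∑ i, a i ^ 2 := by
  simpa only [sq] using integral_sum_mul_sum_of_orthonormal hψ hψorth a a

theorem integral_sq_sum_pos_of_orthonormal (hψ : ∀ i, MemLp (ψ i) 2 μ)
    (hψorth : ∀ i j, ∫ x, ψ i x * ψ j x ∂μ = if i = j then 1 else 0) {a : ι → ℝ}
    (ha : a ≠ 0) : 0 < ∫ x, (∑ i, a i * ψ i x) ^ 2 ∂μ := by
  rw [integral_sq_sum_of_orthonormal hψ hψorth]
  obtain ⟨i, hi⟩ := Function.ne_iff.mp ha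
  exact (sq_pos_of_ne_zero hi).trans_le
    (Finset.single_le_sum (fun k _ => sq_nonneg (a k)) (Finset.mem_univ i))

theorem integral_integral_kernel_mul_sum_of_eigen {K : α → α → ℝ} {lamρ : ι → ℝ}
    (hψ : ∀ i, MemLp (ψ i) 2 μ)
    (hψorth : ∀ i j, ∫ x, ψ i x * ψ j x ∂μ = if i = j then 1 else 0)
    (hKψ : ∀ x i, Integrable (fun y => K x y * ψ i y) μ)
    (hψeig : ∀ i x, ∫ y, K x y * ψ i y ∂μ = lamρ i * ψ i x) (a : ι → ℝ) :
    ∫ x, ∫ y, K x y * (∑ i, a i * ψ i x) * (∑ i, a i * ψ i y) ∂μ ∂μ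
      = ∑ i, lamρ i * a i ^ 2 := by
  have hT : ∀ x, ∫ y, K x y * (∑ i, a i * ψ i x) * (∑ i, a i * ψ i y) ∂μ
      = (∑ i, a i * ψ i x) * ∑ i, (lamρ i * a i) * ψ i x := by
    intro x
    calc ∫ y, K x y * (∑ i, a i * ψ i x) * (∑ i, a i * ψ i y) ∂μ
        = (∑ i, a i * ψ i x) * ∫ y, K x y * ∑ i, a i * ψ i y ∂μ := by
          rw [← integral_const_mul]
          exact integral_congr_ae (ae_of_all _ fun y => by ring)
      _ = (∑ i, a i * ψ i x) * ∑ i, (lamρ i * a i) * ψ i x := by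
          rw [integral_mul_sum_mul _ _ fun i _ => hKψ x i]
          simp_rw [hψeig]
          exact congrArg _ (Finset.sum_congr rfl fun i _ => by ring)
  simp_rw [hT]
  rw [integral_sum_mul_sum_of_orthonormal hψ hψorth]
  exact Finset.sum_congr rfl fun i _ => by ring

theorem mul_integral_sq_sum_le_integral_integral_kernel {K : α → α → ℝ} {lamρ : ι → ℝ}
    {c : ℝ} (hψ : ∀ i, MemLp (ψ i) 2 μ)
    (hψorth : ∀ i j, ∫ x, ψ i x * ψ j x ∂μ = if i = j then 1 else 0)
    (hKψ : ∀ x i, Integrable (fun y => K x y * ψ i y) μ)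
    (hψeig : ∀ i x, ∫ y, K x y * ψ i y ∂μ = lamρ i * ψ i x) (hc : ∀ i, c ≤ lamρ i)
    (a : ι → ℝ) :
    c * ∫ x, (∑ i, a i * ψ i x) ^ 2 ∂μ
      ≤ ∫ x, ∫ y, K x y * (∑ i, a i * ψ i x) * (∑ i, a i * ψ i y) ∂μ ∂μ := by
  rw [integral_sq_sum_of_orthonormal hψ hψorth,
    integral_integral_kernel_mul_sum_of_eigen hψ hψorth hKψ hψeig, Finset.mul_sum]
  exact Finset.sum_le_sum fun i _ => mul_le_mul_of_nonneg_right (hc i) (sq_nonneg _)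

end Orthonormal

end Integrals

theorem HasSum.le_tsum_ge_of_eq_zero {f g : ℕ → ℝ} {a : ℝ} {m : ℕ} (hf : HasSum f a)
    (hf0 : ∀ j < m, f j = 0) (hfg : ∀ j, m ≤ j → f j ≤ g j) (hg : Summable g) :
    a ≤ ∑' j : {j : ℕ // m ≤ j}, g j := by
  have hsupp : Function.support f ⊆ {j | m ≤ j} := fun j hj =>
    not_lt.mp fun hjm => hj (hf0 j hjm)
  have hf' : HasSum (fun j : {j : ℕ // m ≤ j} => f j) a :=
    (hasSum_subtype_iff_of_support_subset hsupp).mpr hf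
  exact hasSum_le (fun j : {j : ℕ // m ≤ j} => hfg j j.2) hf' (hg.subtype _).hasSum

section CompactSupport

variable {α : Type*} [TopologicalSpace α] [MeasurableSpace α] [OpensMeasurableSpace α]
  {μ : Measure α} [IsFiniteMeasure μ] {S : Set α}

theorem Continuous.memLp_of_ae_mem_isCompact (hS : IsCompact S) (hμS : ∀ᵐ x ∂μ, x ∈ S)
    {g : α → ℝ} (hg : Continuous g) (p : ENNReal) : MemLp g p μ := by
  obtain ⟨C, hC⟩ := hS.exists_bound_of_continuousOn hg.continuousOn
  exact MemLp.of_bound hg.aestronglyMeasurable C (hμS.mono hC)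

theorem Continuous.integrable_of_ae_mem_isCompact (hS : IsCompact S) (hμS : ∀ᵐ x ∂μ, x ∈ S)
    {g : α → ℝ} (hg : Continuous g) : Integrable g μ :=
  memLp_one_iff_integrable.mp (hg.memLp_of_ae_mem_isCompact hS hμS 1)

section Mercer

variable {ι : Type*} [Countable ι] {K : α → α → ℝ} {lam : ι → ℝ} {g : ι → α → ℝ}

theorem hasSum_integral_diag_of_hasSum_kernel (hS : IsCompact S) (hμS : ∀ᵐ x ∂μ, x ∈ S)
    (hK : Continuous fun x => K x x) (hg : ∀ j, Continuous (g j)) (hlam : ∀ j, 0 ≤ lam j)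
    (hKg : ∀ x, HasSum (fun j => lam j * g j x * g j x) (K x x)) :
    HasSum (fun j => lam j * ∫ x, g j x ^ 2 ∂μ) (∫ x, K x x ∂μ) := by
  simp_rw [← integral_const_mul, sq, ← mul_assoc]
  exact hasSum_integral_of_nonneg
    (fun j => ((continuous_const.mul (hg j)).mul (hg j)).aestronglyMeasurable)
    (fun j => ae_of_all _ fun x => by
      simp only [Pi.zero_apply, mul_assoc]
      exact mul_nonneg (hlam j) (mul_self_nonneg (g j x)))
    (hK.integrable_of_ae_mem_isCompact hS hμS) (ae_of_all _ hKg)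

theorem hasSum_integral_integral_of_hasSum_kernel [SecondCountableTopology α]
    (hS : IsCompact S) (hμS : ∀ᵐ x ∂μ, x ∈ S)
    (hK : Continuous fun p : α × α => K p.1 p.2) (hg : ∀ j, Continuous (g j))
    (hlam : ∀ j, 0 ≤ lam j) (hKg : ∀ x y, HasSum (fun j => lam j * g j x * g j y) (K x y)) :
    HasSum (fun j => lam j * (∫ x, g j x ∂μ) ^ 2) (∫ x, ∫ y, K x y ∂μ ∂μ) := by
  have hSS : ∀ᵐ z ∂μ.prod μ, z ∈ S ×ˢ S :=
    (Measure.quasiMeasurePreserving_fst.ae hμS).and (Measure.quasiMeasurePreserving_snd.ae hμS)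
  have hint : ∀ {G : α × α → ℝ}, Continuous G → Integrable G (μ.prod μ) :=
    fun hG => hG.integrable_of_ae_mem_isCompact (hS.prod hS) hSS
  have hterm : ∀ j, ∫ z, lam j * g j z.1 * g j z.2 ∂μ.prod μ = lam j * (∫ x, g j x ∂μ) ^ 2 := by
    intro j
    rw [integral_prod_mul (fun x => lam j * g j x) (g j), integral_const_mul, sq, mul_assoc]
  -- `|u v| ≤ (u² + v²) / 2` turns the series on the diagonal into a summable majorant.
  have hbound : ∀ z : α × α, HasSum (fun j => lam j * ((g j z.1 ^ 2 + g j z.2 ^ 2) / 2))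
      ((K z.1 z.1 + K z.2 z.2) / 2) := fun z =>
    (((hKg z.1 z.1).add (hKg z.2 z.2)).div_const 2).congr_fun fun j => by ring
  have hdiag : Continuous fun z : α × α => (K z.1 z.1 + K z.2 z.2) / 2 :=
    ((hK.comp (continuous_fst.prodMk continuous_fst)).add
      (hK.comp (continuous_snd.prodMk continuous_snd))).div_const 2
  rw [← integral_prod _ (hint hK)]
  simp_rw [← hterm]
  refine hasSum_integral_of_dominated_convergence _
    (fun j => (((continuous_const.mul ((hg j).comp continuous_fst)).mul
      ((hg j).comp continuous_snd))).aestronglyMeasurable)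
    (fun j => ae_of_all _ fun z => ?_) (ae_of_all _ fun z => (hbound z).summable)
    ((hint hdiag).congr (ae_of_all _ fun z => (hbound z).tsum_eq.symm))
    (ae_of_all _ fun z => hKg z.1 z.2)
  rw [Real.norm_eq_abs, mul_assoc, abs_mul, abs_of_nonneg (hlam j)]
  refine mul_le_mul_of_nonneg_left (abs_le.mpr ⟨?_, ?_⟩) (hlam j)
  · nlinarith [sq_nonneg (g j z.1 + g j z.2)]
  · nlinarith [sq_nonneg (g j z.1 - g j z.2)]

end Mercer

theorem integral_integral_kernel_mul_le_of_forall_lt_integral_mul_eq_zero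
    [SecondCountableTopology α] {K : α → α → ℝ} {lam : ℕ → ℝ} {φ : ℕ → α → ℝ}
    (hS : IsCompact S) (hμS : ∀ᵐ x ∂μ, x ∈ S) (hK : Continuous fun p : α × α => K p.1 p.2)
    (hφ : ∀ j, Continuous (φ j)) (hlam : ∀ j, 0 ≤ lam j)
    (hKφ : ∀ x y, HasSum (fun j => lam j * φ j x * φ j y) (K x y))
    {f : α → ℝ} (hf : Continuous f) {m : ℕ} (hφf : ∀ j < m, ∫ x, φ j x * f x ∂μ = 0) :
    ∫ x, ∫ y, K x y * f x * f y ∂μ ∂μ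
      ≤ (∑' j : {j : ℕ // m ≤ j}, lam j * ∫ x, φ j x ^ 2 ∂μ) * ∫ x, f x ^ 2 ∂μ := by
  have hL2 : ∀ {g : α → ℝ}, Continuous g → MemLp g 2 μ :=
    fun hg => hg.memLp_of_ae_mem_isCompact hS hμS 2
  have hQ := hasSum_integral_integral_of_hasSum_kernel (μ := μ)
    (K := fun x y => K x y * f x * f y) (g := fun j x => φ j x * f x) hS hμS
    ((hK.mul (hf.comp continuous_fst)).mul (hf.comp continuous_snd))
    (fun j => (hφ j).mul hf) hlam fun x y => by
      have h := (hKφ x y).mul_right (f x * f y)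
      rw [← mul_assoc] at h
      exact h.congr_fun fun j => by ring
  have hN : Summable fun j => lam j * ∫ x, φ j x ^ 2 ∂μ :=
    (hasSum_integral_diag_of_hasSum_kernel hS hμS
      (hK.comp (continuous_id.prodMk continuous_id)) hφ hlam fun x => hKφ x x).summable
  rw [← tsum_mul_right]
  refine hQ.le_tsum_ge_of_eq_zero (fun j hj => by simp [hφf j hj]) (fun j _ => ?_)
    (hN.mul_right _)
  rw [mul_assoc]
  exact mul_le_mul_of_nonneg_left
    (sq_integral_mul_le_integral_sq_mul_integral_sq (hL2 (hφ j)) (hL2 hf)) (hlam j)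

end CompactSupport

theorem eigenvalue_bound_unknown_measure_general
    {d : ℕ}
    {X : Set (EuclideanSpace ℝ (Fin d))} (hXcomp : IsCompact X)
    (ρm : Measure (EuclideanSpace ℝ (Fin d)))
    [IsProbabilityMeasure ρm]
    (hρX : ρm X = 1)
    (K : EuclideanSpace ℝ (Fin d) → EuclideanSpace ℝ (Fin d) → ℝ)
    (hKcont : Continuous fun p : EuclideanSpace ℝ (Fin d) × EuclideanSpace ℝ (Fin d) => K p.1 p.2)
    (lam : ℕ → ℝ) (φ : ℕ → EuclideanSpace ℝ (Fin d) → ℝ)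
    (hlam_pos : ∀ m, 0 < lam m)
    (hφcont : ∀ m, Continuous (φ m))
    (hMercer : ∀ x y, HasSum (fun m => lam m * φ m x * φ m y) (K x y))
    (lamρ : ℕ → ℝ) (ψ : ℕ → EuclideanSpace ℝ (Fin d) → ℝ)
    (hlamρ_anti : Antitone lamρ)
    (hψcont : ∀ m, Continuous (ψ m))
    (hψorth : ∀ i j, ∫ y, ψ i y * ψ j y ∂ρm = if i = j then 1 else 0)
    (hψeig : ∀ m x, ∫ y, K x y * ψ m y ∂ρm = lamρ m * ψ m x)
    (m : ℕ) :
    lamρ m ≤ ∑' j : {j : ℕ // m ≤ j}, lam j * ∫ y, (φ j y) ^ 2 ∂ρm := by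
  have hρX' : ∀ᵐ x ∂ρm, x ∈ X :=
    (mem_ae_iff_prob_eq_one hXcomp.isClosed.measurableSet).mpr hρX
  have hL2 : ∀ {g : EuclideanSpace ℝ (Fin d) → ℝ}, Continuous g → MemLp g 2 ρm :=
    fun hg => hg.memLp_of_ae_mem_isCompact hXcomp hρX' 2
  have hψ : ∀ i : Fin (m + 1), MemLp (ψ i) 2 ρm := fun i => hL2 (hψcont i)
  have hψorth' : ∀ i j : Fin (m + 1), ∫ y, ψ i y * ψ j y ∂ρm = if i = j then 1 else 0 :=
    fun i j => by simp only [hψorth, Fin.val_inj]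
  have hKψ : ∀ x (i : Fin (m + 1)), Integrable (fun y => K x y * ψ i y) ρm :=
    fun x i => (hL2 (hKcont.comp (Continuous.prodMk_right x))).integrable_mul (hψ i)
  obtain ⟨a, ha0, hφf⟩ := exists_ne_zero_forall_integral_mul_sum_eq_zero
    (φ := fun j : Fin m => φ j) (fun j => hL2 (hφcont j)) hψ (by simp)
  set f := fun x => ∑ i : Fin (m + 1), a i * ψ i x
  have hlow := mul_integral_sq_sum_le_integral_integral_kernel hψ hψorth' hKψ (fun i => hψeig i)
    (fun i => hlamρ_anti (Nat.lt_succ_iff.mp i.isLt)) a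
  have hup := integral_integral_kernel_mul_le_of_forall_lt_integral_mul_eq_zero hXcomp hρX'
    hKcont hφcont (fun j => (hlam_pos j).le) hMercer
    (continuous_finsetSum _ fun i _ => continuous_const.mul (hψcont i))
    (f := f) fun j hj => hφf ⟨j, hj⟩
  exact le_of_mul_le_mul_right (hlow.trans hup)
    (integral_sq_sum_pos_of_orthonormal hψ hψorth' ha0)

/-- (Theorem 1, first part.)  Let `K` be a continuous symmetric positive
semi-definite Mercer kernel on a compact set `X ⊆ ℝ^d`, with injective integral operator on
`L²(X, dP)` having orthonormal (complete) continuous eigenfunctions `φ m` and positive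
nonincreasing eigenvalues `lam m` (indexed from `0`, so `lam m` is the paper's
`λ_{m+1}`), and Mercer expansion `K x y = Σ_m lam m * φ m x * φ m y`.  Let `ρm` be a
probability measure on `X`, absolutely continuous w.r.t. `P` with bounded density, and let
`lamρ m` be the eigenvalues of the integral operator `T_{K,ρ}` on `L²(X, dρ)`, listed
decreasingly with multiplicity (orthonormal eigenfunctions `ψ m`, complete for the operator).
Then for every `m`, `lamρ m ≤ Σ_{j ≥ m} lam j * ‖φ j‖²_ρ`. -/
theorem eigenvalue_bound_unknown_measure
    {d : ℕ} (hd : 1 ≤ d)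
    {X : Set (EuclideanSpace ℝ (Fin d))} (hXcomp : IsCompact X) (hXne : X.Nonempty)
    (P ρm : Measure (EuclideanSpace ℝ (Fin d)))
    [IsProbabilityMeasure P] [IsProbabilityMeasure ρm]
    (hPX : P X = 1) (hρX : ρm X = 1)
    (K : EuclideanSpace ℝ (Fin d) → EuclideanSpace ℝ (Fin d) → ℝ)
    (hKcont : Continuous fun p : EuclideanSpace ℝ (Fin d) × EuclideanSpace ℝ (Fin d) => K p.1 p.2)
    (hKsymm : ∀ x y, K x y = K y x)
    (lam : ℕ → ℝ) (φ : ℕ → EuclideanSpace ℝ (Fin d) → ℝ)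
    (hlam_pos : ∀ m, 0 < lam m) (hlam_anti : Antitone lam)
    (hφcont : ∀ m, Continuous (φ m))
    (hφorth : ∀ i j, ∫ y, φ i y * φ j y ∂P = if i = j then 1 else 0)
    (hφcomplete : ∀ f : EuclideanSpace ℝ (Fin d) → ℝ, MemLp f 2 P →
      (∀ m, ∫ y, f y * φ m y ∂P = 0) → f =ᵐ[P] 0)
    (hMercer : ∀ x y, HasSum (fun m => lam m * φ m x * φ m y) (K x y))
    (hac : ρm ≪ P)
    (hrnBdd : ∃ M : ℝ, ∀ᵐ x ∂P, (ρm.rnDeriv P x).toReal ≤ M)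
    (lamρ : ℕ → ℝ) (ψ : ℕ → EuclideanSpace ℝ (Fin d) → ℝ)
    (hlamρ_nonneg : ∀ m, 0 ≤ lamρ m) (hlamρ_anti : Antitone lamρ)
    (hψcont : ∀ m, Continuous (ψ m))
    (hψorth : ∀ i j, ∫ y, ψ i y * ψ j y ∂ρm = if i = j then 1 else 0)
    (hψeig : ∀ m x, ∫ y, K x y * ψ m y ∂ρm = lamρ m * ψ m x)
    (hψcomplete : ∀ f : EuclideanSpace ℝ (Fin d) → ℝ, MemLp f 2 ρm →
      (∀ m, ∫ y, f y * ψ m y ∂ρm = 0) → ∀ x, ∫ y, K x y * f y ∂ρm = 0)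
    (m : ℕ) :
    lamρ m ≤ ∑' j : {j : ℕ // m ≤ j}, lam j * ∫ y, (φ j y) ^ 2 ∂ρm :=
  eigenvalue_bound_unknown_measure_general hXcomp ρm hρX K hKcont lam φ hlam_pos hφcont hMercer lamρ
    ψ hlamρ_anti hψcont hψorth hψeig m
end

section
/- Suppose there exist constants C > 0, b > 0 and a ≥ 0 such that λ_j ≤ C e^{−bj} and ‖φ_j‖²_ρ ≤ C j^a for all j ≥ 1. Then there is a constant C' > 0 such that for every integer m with b·m > a, the eigenvalues of T_{𝕂,ρ} satisfy λ_{m+1,ρ} ≤ C' (1/b^{a+1}) Γ(a+1, b m) ≤ C' (bm)^{a+1} e^{−bm} / (b^{a+1}(bm − a)); in particular λ_{m+1,ρ} ≤ C'' m^a e^{−bm} for some constant C'' > 0 and all m large enough, where Γ(s, x) = ∫_x^∞ u^{s−1} e^{−u} du is the upper incomplete Gamma function. -/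
/-!
Courant–Fischer in coefficient form. Integrating the Mercer series of `K` against the
`ρ`-eigenfunctions `ψ_i` gives the Gram identity `∑_j λ_j c_{ji} c_{jk} = λ_{i,ρ} δ_{ik}` for the
coefficients `c_{ji} = ⟨φ_j, ψ_i⟩_ρ`. A unit vector `x ∈ ℝ^{m+1}` with `∑_i x_i c_{ji} = 0` for all
`j < m` then gives `λ_{m,ρ} ≤ ∑_i x_i² λ_{i,ρ} = ∑_{j ≥ m} λ_j (∑_i x_i c_{ji})²`, and by Bessel
`(∑_i x_i c_{ji})² ≤ ‖φ_j‖²_ρ`. The decay assumptions bound the tail `∑_{j ≥ m} λ_j ‖φ_j‖²_ρ` by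
`C² ∑_{j > m} j^a e^{-bj}`, which is compared term by term with `∫_{bm}^∞ u^a e^{-u} du`.
-/

open MeasureTheory Set Filter Real

section L2

variable {α : Type*} [MeasurableSpace α] {μ : Measure α}

theorem integral_abs_mul_le_sqrt_mul_sqrt {f g : α → ℝ} (hf : MemLp f 2 μ) (hg : MemLp g 2 μ) :
    ∫ x, |f x * g x| ∂μ ≤ √(∫ x, f x ^ 2 ∂μ) * √(∫ x, g x ^ 2 ∂μ) := by
  have := integral_mul_norm_le_Lp_mul_Lq Real.HolderConjugate.two_two
    (by simpa using hf) (by simpa using hg)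
  simpa [abs_mul, Real.sqrt_eq_rpow, Real.rpow_two] using this

theorem MeasureTheory.MemLp.inner_toLp_eq_integral {f g : α → ℝ} (hf : MemLp f 2 μ)
    (hg : MemLp g 2 μ) :
    inner ℝ (hf.toLp f) (hg.toLp g) = ∫ x, f x * g x ∂μ := by
  rw [L2.inner_def]
  apply integral_congr_ae
  filter_upwards [hf.coeFn_toLp, hg.coeFn_toLp] with x hfx hgx
  simp [hfx, hgx, mul_comm]

theorem sum_sq_integral_mul_le_integral_sq {ι : Type*} [DecidableEq ι] {f : α → ℝ}
    {ψ : ι → α → ℝ} (hf : MemLp f 2 μ) (hψ : ∀ i, MemLp (ψ i) 2 μ)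
    (hψorth : ∀ i k, ∫ x, ψ i x * ψ k x ∂μ = if i = k then 1 else 0) (s : Finset ι) :
    ∑ i ∈ s, (∫ x, f x * ψ i x ∂μ) ^ 2 ≤ ∫ x, f x ^ 2 ∂μ := by
  have horth : Orthonormal ℝ fun i => (hψ i).toLp (ψ i) := by
    rw [orthonormal_iff_ite]
    intro i k
    exact ((hψ i).inner_toLp_eq_integral (hψ k)).trans (hψorth i k)
  have hbessel := horth.sum_inner_products_le (hf.toLp f) (s := s)
  rw [← real_inner_self_eq_norm_sq, hf.inner_toLp_eq_integral hf] at hbessel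
  simp only [(hψ _).inner_toLp_eq_integral hf, Real.norm_eq_abs, sq_abs] at hbessel
  simpa [mul_comm, sq] using hbessel

theorem hasSum_integral_mul_of_hasSum {u : ℕ → ℝ} {g : ℕ → α → ℝ} {G f : α → ℝ}
    (hG : ∀ x, HasSum (fun j => u j * g j x) (G x)) (hg : ∀ j, MemLp (g j) 2 μ)
    (hf : MemLp f 2 μ) (hu : Summable fun j => |u j| * √(∫ x, g j x ^ 2 ∂μ)) :
    HasSum (fun j => u j * ∫ x, g j x * f x ∂μ) (∫ x, G x * f x ∂μ) := by
  have hint : ∀ j, Integrable (fun x => u j * (g j x * f x)) μ :=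
    fun j => ((hg j).integrable_mul hf).const_mul _
  have hnorm : Summable fun j => ∫ x, ‖u j * (g j x * f x)‖ ∂μ := by
    refine (hu.mul_right √(∫ x, f x ^ 2 ∂μ)).of_nonneg_of_le
      (fun j => integral_nonneg fun _ => norm_nonneg _) fun j => ?_
    simp only [Real.norm_eq_abs, abs_mul (u j)]
    rw [integral_const_mul, mul_assoc]
    exact mul_le_mul_of_nonneg_left (integral_abs_mul_le_sqrt_mul_sqrt (hg j) hf) (abs_nonneg _)
  have htsum : ∀ x, ∑' j, u j * (g j x * f x) = G x * f x := fun x => by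
    simpa only [mul_assoc] using ((hG x).mul_right (f x)).tsum_eq
  simpa only [htsum, integral_const_mul] using
    hasSum_integral_of_summable_integral_norm hint hnorm

theorem Continuous.memLp_of_ae_mem_compact {X : Type*} [TopologicalSpace X] [MeasurableSpace X]
    [OpensMeasurableSpace X] {μ : Measure X} [IsFiniteMeasure μ] {s : Set X} (hs : IsCompact s)
    (hμs : ∀ᵐ x ∂μ, x ∈ s) {f : X → ℝ} (hf : Continuous f) (p : ENNReal) : MemLp f p μ := by
  obtain ⟨C, hC⟩ := hs.exists_bound_of_continuousOn hf.continuousOn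
  exact MemLp.of_bound hf.aestronglyMeasurable C (hμs.mono hC)

end L2

section Mercer

variable {α : Type*} [MeasurableSpace α] {μ : Measure α} {K : α → α → ℝ} {lam lamρ : ℕ → ℝ}
  {φ ψ : ℕ → α → ℝ}

theorem hasSum_mul_integral_mul_of_mercer (hlam : ∀ j, 0 ≤ lam j)
    (hMercer : ∀ x y, HasSum (fun j => lam j * φ j x * φ j y) (K x y))
    (hφ : ∀ j, MemLp (φ j) 2 μ) (hsum : Summable fun j => lam j * ∫ y, φ j y ^ 2 ∂μ)
    {f : α → ℝ} (hf : MemLp f 2 μ) (x : α) :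
    HasSum (fun j => lam j * φ j x * ∫ y, φ j y * f y ∂μ) (∫ y, K x y * f y ∂μ) := by
  -- `|λ_j φ_j(x)| ‖φ_j‖ ≤ (λ_j φ_j(x)² + λ_j ‖φ_j‖²) / 2`: the diagonal `K x x` pays for it
  refine hasSum_integral_mul_of_hasSum (hMercer x) hφ hf
    ((((hMercer x x).summable.add hsum).div_const 2).of_nonneg_of_le (fun _ => by positivity)
      fun j => ?_)
  calc |lam j * φ j x| * √(∫ y, φ j y ^ 2 ∂μ)
      = lam j * (|φ j x| * √(∫ y, φ j y ^ 2 ∂μ)) := by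
        rw [abs_mul, abs_of_nonneg (hlam j), mul_assoc]
    _ ≤ lam j * ((φ j x * φ j x + ∫ y, φ j y ^ 2 ∂μ) / 2) := by
        refine mul_le_mul_of_nonneg_left ?_ (hlam j)
        nlinarith [two_mul_le_add_sq |φ j x| √(∫ y, φ j y ^ 2 ∂μ), sq_abs (φ j x),
          sq_sqrt (integral_nonneg fun y => sq_nonneg (φ j y) : 0 ≤ ∫ y, φ j y ^ 2 ∂μ)]
    _ = _ := by ring

theorem hasSum_gram_of_mercer (hlam : ∀ j, 0 ≤ lam j)
    (hMercer : ∀ x y, HasSum (fun j => lam j * φ j x * φ j y) (K x y))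
    (hφ : ∀ j, MemLp (φ j) 2 μ) (hsum : Summable fun j => lam j * ∫ y, φ j y ^ 2 ∂μ)
    (hψ : ∀ i, MemLp (ψ i) 2 μ) (hψorth : ∀ i k, ∫ y, ψ i y * ψ k y ∂μ = if i = k then 1 else 0)
    (hψeig : ∀ k x, ∫ y, K x y * ψ k y ∂μ = lamρ k * ψ k x) (i k : ℕ) :
    HasSum (fun j => lam j * (∫ y, φ j y * ψ i y ∂μ) * ∫ y, φ j y * ψ k y ∂μ)
      (lamρ i * if i = k then 1 else 0) := by
  have hexpand : ∀ y, HasSum (fun j => (lam j * ∫ x, φ j x * ψ i x ∂μ) * φ j y)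
      (lamρ i * ψ i y) := fun y => by
    rw [← hψeig]
    convert hasSum_mul_integral_mul_of_mercer hlam hMercer hφ hsum (hψ i) y using 2 with j
    ring
  have hcoeff : ∀ j, |∫ x, φ j x * ψ i x ∂μ| ≤ √(∫ x, φ j x ^ 2 ∂μ) := fun j =>
    abs_le_sqrt (by simpa using sum_sq_integral_mul_le_integral_sq (hφ j) hψ hψorth {i})
  have hu : Summable fun j => |lam j * ∫ x, φ j x * ψ i x ∂μ| * √(∫ x, φ j x ^ 2 ∂μ) := by
    refine hsum.of_nonneg_of_le (fun _ => by positivity) fun j => ?_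
    rw [abs_mul, abs_of_nonneg (hlam j), mul_assoc]
    refine mul_le_mul_of_nonneg_left ?_ (hlam j)
    calc _ ≤ √(∫ x, φ j x ^ 2 ∂μ) * √(∫ x, φ j x ^ 2 ∂μ) :=
          mul_le_mul_of_nonneg_right (hcoeff j) (sqrt_nonneg _)
      _ = _ := mul_self_sqrt (integral_nonneg fun x => sq_nonneg _)
  simpa only [mul_assoc, integral_const_mul, hψorth] using
    hasSum_integral_mul_of_hasSum hexpand hφ (hψ k) hu

end Mercer

theorem exists_sum_sq_eq_one_forall_sum_mul_eq_zero {m n : ℕ} (h : m < n)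
    (v : Fin m → Fin n → ℝ) : ∃ x : Fin n → ℝ, ∑ i, x i ^ 2 = 1 ∧ ∀ j, ∑ i, x i * v j i = 0 := by
  obtain ⟨y, hy, hy0⟩ := Submodule.exists_mem_ne_zero_of_ne_bot
    (LinearMap.ker_ne_bot_of_finrank_lt (f := (Matrix.of v).mulVecLin) (by simpa using h))
  have hpos : 0 < ∑ i, y i ^ 2 := by
    obtain ⟨i, hi⟩ := Function.ne_iff.mp hy0
    exact Finset.sum_pos' (fun i _ => sq_nonneg _) ⟨i, Finset.mem_univ i, sq_pos_of_ne_zero hi⟩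
  refine ⟨fun i => y i / √(∑ i, y i ^ 2), ?_, fun j => ?_⟩
  · simp only [div_pow, ← Finset.sum_div, sq_sqrt hpos.le, div_self hpos.ne']
  · have hj := congrFun (LinearMap.mem_ker.mp hy) j
    simp only [Matrix.mulVecLin_apply, Matrix.mulVec, dotProduct, Matrix.of_apply] at hj
    simp only [div_mul_eq_mul_div, ← Finset.sum_div, mul_comm (y _), hj, Pi.zero_apply, zero_div]

theorem le_tsum_of_hasSum_gram {lam lamρ N : ℕ → ℝ} {c : ℕ → ℕ → ℝ} (m : ℕ)
    (hlam : ∀ j, 0 ≤ lam j) (hanti : Antitone lamρ)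
    (hgram : ∀ i k, HasSum (fun j => lam j * c j i * c j k) (lamρ i * if i = k then 1 else 0))
    (hbessel : ∀ j, ∑ i ∈ Finset.range (m + 1), c j i ^ 2 ≤ N j)
    (hsum : Summable fun j => lam j * N j) :
    lamρ m ≤ ∑' j, lam (j + m) * N (j + m) := by
  obtain ⟨x, hx1, hx⟩ :=
    exists_sum_sq_eq_one_forall_sum_mul_eq_zero (Nat.lt_succ_self m) fun j i => c j i
  set w : ℕ → ℝ := fun j => ∑ i : Fin (m + 1), x i * c j i
  have hw : HasSum (fun j => lam j * w j ^ 2) (∑ i : Fin (m + 1), x i ^ 2 * lamρ i) := by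
    have hexpand : (fun j => lam j * w j ^ 2) =
        fun j => ∑ i : Fin (m + 1), ∑ k : Fin (m + 1), x i * x k * (lam j * c j i * c j k) := by
      funext j
      rw [sq, Finset.sum_mul_sum, Finset.mul_sum]
      refine Finset.sum_congr rfl fun i _ => ?_
      rw [Finset.mul_sum]
      exact Finset.sum_congr rfl fun k _ => by ring
    have hdiag : ∑ i : Fin (m + 1), x i ^ 2 * lamρ i = ∑ i : Fin (m + 1), ∑ k : Fin (m + 1),
        x i * x k * (lamρ i * if (i : ℕ) = k then 1 else 0) := by
      simp only [Fin.val_inj, mul_ite, mul_one, mul_zero, Finset.sum_ite_eq, Finset.mem_univ,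
        if_true]
      exact Finset.sum_congr rfl fun i _ => by ring
    rw [hexpand, hdiag]
    exact hasSum_sum fun i _ => hasSum_sum fun k _ => (hgram i k).mul_left (x i * x k)
  have hlow : lamρ m ≤ ∑ i : Fin (m + 1), x i ^ 2 * lamρ i :=
    calc lamρ m = ∑ i : Fin (m + 1), x i ^ 2 * lamρ m := by rw [← Finset.sum_mul, hx1, one_mul]
      _ ≤ _ := Finset.sum_le_sum fun i _ =>
        mul_le_mul_of_nonneg_left (hanti (Nat.lt_succ_iff.mp i.isLt)) (sq_nonneg _)
  have hw_head : ∑ j ∈ Finset.range m, lam j * w j ^ 2 = 0 :=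
    Finset.sum_eq_zero fun j hj => by
      simp [w, hx ⟨j, Finset.mem_range.mp hj⟩]
  have hw_le : ∀ j, w j ^ 2 ≤ N j := fun j =>
    calc w j ^ 2 ≤ (∑ i : Fin (m + 1), x i ^ 2) * ∑ i : Fin (m + 1), c j i ^ 2 :=
          Finset.sum_mul_sq_le_sq_mul_sq _ _ _
      _ ≤ N j := by
          rw [hx1, one_mul, Fin.sum_univ_eq_sum_range (fun i => c j i ^ 2)]
          exact hbessel j
  have htail := (hasSum_nat_add_iff' m).mpr hw
  rw [hw_head, sub_zero] at htail
  exact hlow.trans (hasSum_le (fun j => mul_le_mul_of_nonneg_left (hw_le _) (hlam _)) htail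
    ((summable_nat_add_iff m).mpr hsum).hasSum)

section GammaTail

variable {a b : ℝ}

theorem integrableOn_rpow_mul_exp_neg_Ioi (ha : -1 < a) {x : ℝ} (hx : 0 ≤ x) :
    IntegrableOn (fun u => u ^ a * exp (-u)) (Ioi x) := by
  have := integrableOn_rpow_mul_exp_neg_rpow ha one_pos
  simp only [rpow_one] at this
  exact this.mono_set (Ioi_subset_Ioi hx)

theorem integral_Ioi_rpow_mul_exp_neg_le (ha : 0 ≤ a) {x : ℝ} (hx : a < x) :
    ∫ u in Ioi x, u ^ a * exp (-u) ≤ x ^ (a + 1) * exp (-x) / (x - a) := by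
  have hx0 : 0 < x := ha.trans_lt hx
  set c := (x - a) / x
  have hc : 0 < c := div_pos (by linarith) hx0
  -- concavity of `log` gives `u ^ a ≤ x ^ a * exp (a * (u - x) / x)`, so the integrand decays
  -- at least at the exponential rate `c = 1 - a / x`
  have hpt : ∀ u ∈ Ioi x, u ^ a * exp (-u) ≤ x ^ a * exp (-x) * exp (c * x) * exp (-c * u) := by
    intro u (hu : x < u)
    have hu0 : 0 < u := hx0.trans hu
    have hlog : log u ≤ log x + (u - x) / x := by
      have := log_le_sub_one_of_pos (div_pos hu0 hx0)
      rw [log_div hu0.ne' hx0.ne', div_sub_one hx0.ne'] at this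
      linarith
    rw [rpow_def_of_pos hu0, rpow_def_of_pos hx0, ← exp_add, ← exp_add, ← exp_add, ← exp_add,
      exp_le_exp]
    have hcx : c * x = x - a := div_mul_cancel₀ _ hx0.ne'
    have hcu : c * u = u - a * (u / x) := by simp only [c]; field_simp
    have hau : a * ((u - x) / x) = a * (u / x) - a := by field_simp
    linarith [mul_le_mul_of_nonneg_left hlog ha]
  have hval : ∫ u in Ioi x, exp (-c * u) = exp (-(c * x)) / c := by
    have := integral_comp_mul_left_Ioi (fun t => exp (-t)) x hc
    simp only [integral_exp_neg_Ioi, smul_eq_mul, neg_mul] at this ⊢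
    rw [this, inv_mul_eq_div]
  calc ∫ u in Ioi x, u ^ a * exp (-u)
      ≤ ∫ u in Ioi x, x ^ a * exp (-x) * exp (c * x) * exp (-c * u) :=
        setIntegral_mono_on (integrableOn_rpow_mul_exp_neg_Ioi (by linarith) hx0.le)
          ((exp_neg_integrableOn_Ioi x hc).const_mul _) measurableSet_Ioi hpt
    _ = x ^ (a + 1) * exp (-x) / (x - a) := by
        rw [integral_const_mul, hval, rpow_add hx0, rpow_one, mul_assoc, mul_div_assoc',
          ← exp_add, add_neg_cancel, exp_zero]
        simp only [c]
        field_simp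

theorem mul_integral_Ioi_rpow_mul_exp_neg_le {c : ℝ} (hc : 0 ≤ c) (ha : 0 ≤ a) (hb : 0 < b)
    {x : ℝ} (hx : a < x) :
    c * (1 / b ^ (a + 1)) * ∫ u in Ioi x, u ^ a * exp (-u) ≤
      c * x ^ (a + 1) * exp (-x) / (b ^ (a + 1) * (x - a)) :=
  calc _ = c / b ^ (a + 1) * ∫ u in Ioi x, u ^ a * exp (-u) := by rw [mul_one_div]
    _ ≤ c / b ^ (a + 1) * (x ^ (a + 1) * exp (-x) / (x - a)) := by
        have : 0 ≤ c / b ^ (a + 1) := div_nonneg hc (by positivity)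
        gcongr
        exact integral_Ioi_rpow_mul_exp_neg_le ha hx
    _ = _ := by rw [div_mul_div_comm, ← mul_assoc]

theorem rpow_mul_exp_neg_le_integral_Ioc (ha : 0 ≤ a) (hb : 0 < b) {t : ℝ} (ht : 1 ≤ t) :
    (t + 1) ^ a * exp (-b * (t + 1)) ≤
      2 ^ a / b ^ (a + 1) * ∫ u in Ioc (b * t) (b * (t + 1)), u ^ a * exp (-u) := by
  have hbt : 0 < b * t := by positivity
  have hlow : ∀ u ∈ Ioc (b * t) (b * (t + 1)),
      (b * t) ^ a * exp (-(b * (t + 1))) ≤ u ^ a * exp (-u) :=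
    fun u hu => mul_le_mul (rpow_le_rpow hbt.le hu.1.le ha) (exp_le_exp.mpr (neg_le_neg hu.2))
      (exp_pos _).le (rpow_nonneg (hbt.le.trans hu.1.le) a)
  have hint : ∫ u in Ioc (b * t) (b * (t + 1)), (b * t) ^ a * exp (-(b * (t + 1))) =
      b * ((b * t) ^ a * exp (-(b * (t + 1)))) := by
    rw [setIntegral_const, Real.volume_real_Ioc_of_le (by nlinarith), smul_eq_mul]
    ring
  have hmono := setIntegral_mono_on (integrableOn_const (by simp) enorm_ne_top)
    ((integrableOn_rpow_mul_exp_neg_Ioi (by linarith) hbt.le).mono_set Ioc_subset_Ioi_self)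
    measurableSet_Ioc hlow
  rw [hint] at hmono
  calc (t + 1) ^ a * exp (-b * (t + 1)) ≤ (2 * t) ^ a * exp (-b * (t + 1)) := by
        gcongr; linarith
    _ = 2 ^ a / b ^ (a + 1) * (b * ((b * t) ^ a * exp (-(b * (t + 1))))) := by
        rw [mul_rpow two_pos.le (by linarith), mul_rpow hb.le (by linarith), rpow_add hb,
          rpow_one, neg_mul]
        field_simp
    _ ≤ _ := by gcongr

theorem sum_range_rpow_mul_exp_neg_le (ha : 0 ≤ a) (hb : 0 < b) {m : ℕ} (hm : 1 ≤ m) (n : ℕ) :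
    ∑ j ∈ Finset.range n, ((j : ℝ) + m + 1) ^ a * exp (-b * ((j : ℝ) + m + 1)) ≤
      2 ^ a / b ^ (a + 1) * ∫ u in Ioi (b * m), u ^ a * exp (-u) := by
  have hbm : 0 ≤ b * m := by positivity
  have hm' : (1 : ℝ) ≤ m := by exact_mod_cast hm
  have hint : IntegrableOn (fun u => u ^ a * exp (-u)) (Ioi 0) :=
    integrableOn_rpow_mul_exp_neg_Ioi (by linarith) le_rfl
  have hadj := intervalIntegral.sum_integral_adjacent_intervals (n := n)
    (a := fun j : ℕ => b * ((j : ℝ) + m)) (f := fun u => u ^ a * exp (-u)) (μ := volume)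
    fun j _ => intervalIntegrable_iff.mpr
      (hint.mono_set fun u hu => (le_min (by positivity) (by positivity)).trans_lt hu.1)
  push_cast at hadj
  calc _ ≤ ∑ j ∈ Finset.range n,
        2 ^ a / b ^ (a + 1) * ∫ u in Ioc (b * (j + m)) (b * (j + m + 1)), u ^ a * exp (-u) :=
        Finset.sum_le_sum fun j _ =>
          rpow_mul_exp_neg_le_integral_Ioc ha hb (by linarith [j.cast_nonneg (α := ℝ)])
    _ = 2 ^ a / b ^ (a + 1) * ∫ u in b * m..b * (n + m), u ^ a * exp (-u) := by
        rw [zero_add] at hadj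
        rw [← Finset.mul_sum, ← hadj]
        congr 1
        refine Finset.sum_congr rfl fun j _ => ?_
        rw [intervalIntegral.integral_of_le (by gcongr; linarith), add_right_comm (j : ℝ) 1]
    _ ≤ _ := by
        gcongr
        rw [intervalIntegral.integral_of_le (by gcongr; linarith)]
        refine setIntegral_mono_set (integrableOn_rpow_mul_exp_neg_Ioi (by linarith) hbm) ?_
          Ioc_subset_Ioi_self.eventuallyLE
        filter_upwards [ae_restrict_mem measurableSet_Ioi] with u (hu : b * m < u)
        have : 0 < u := hbm.trans_lt hu
        positivity

end GammaTail

section Decay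

variable {α : Type*} [MeasurableSpace α] {μ : Measure α} {K : α → α → ℝ} {lam lamρ : ℕ → ℝ}
  {φ ψ : ℕ → α → ℝ} {C a b : ℝ}

theorem summable_rpow_mul_exp_neg (ha : 0 ≤ a) (hb : 0 < b) :
    Summable fun j : ℕ => ((j : ℝ) + 1) ^ a * exp (-b * ((j : ℝ) + 1)) := by
  refine (summable_nat_add_iff 1).mp (summable_of_sum_range_le (fun _ => by positivity)
    (c := 2 ^ a / b ^ (a + 1) * ∫ u in Ioi (b * (1 : ℕ)), u ^ a * exp (-u)) fun n => ?_)
  simpa using sum_range_rpow_mul_exp_neg_le ha hb le_rfl n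

theorem eigenvalue_le_integral_Ioi_of_decay (hlam : ∀ j, 0 ≤ lam j)
    (hMercer : ∀ x y, HasSum (fun j => lam j * φ j x * φ j y) (K x y))
    (hφ : ∀ j, MemLp (φ j) 2 μ) (hψ : ∀ i, MemLp (ψ i) 2 μ)
    (hψorth : ∀ i k, ∫ y, ψ i y * ψ k y ∂μ = if i = k then 1 else 0)
    (hψeig : ∀ k x, ∫ y, K x y * ψ k y ∂μ = lamρ k * ψ k x) (hanti : Antitone lamρ)
    (ha : 0 ≤ a) (hb : 0 < b) (hlam_decay : ∀ j : ℕ, lam j ≤ C * exp (-b * ((j : ℝ) + 1)))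
    (hφ_growth : ∀ j : ℕ, ∫ y, φ j y ^ 2 ∂μ ≤ C * ((j : ℝ) + 1) ^ a) {m : ℕ} (hm : 1 ≤ m) :
    lamρ m ≤ C ^ 2 * 2 ^ a / b ^ (a + 1) * ∫ u in Ioi (b * m), u ^ a * exp (-u) := by
  set g : ℕ → ℝ := fun j => ((j : ℝ) + 1) ^ a * exp (-b * ((j : ℝ) + 1))
  have hbound : ∀ j, lam j * ∫ y, φ j y ^ 2 ∂μ ≤ C ^ 2 * g j := fun j =>
    calc _ ≤ C * exp (-b * ((j : ℝ) + 1)) * (C * ((j : ℝ) + 1) ^ a) :=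
          mul_le_mul (hlam_decay j) (hφ_growth j) (integral_nonneg fun y => sq_nonneg _)
            ((hlam j).trans (hlam_decay j))
      _ = C ^ 2 * g j := by ring
  have hg : Summable g := summable_rpow_mul_exp_neg ha hb
  have hsum : Summable fun j => lam j * ∫ y, φ j y ^ 2 ∂μ :=
    (hg.mul_left _).of_nonneg_of_le
      (fun j => mul_nonneg (hlam j) (integral_nonneg fun y => sq_nonneg _)) hbound
  calc lamρ m ≤ ∑' j, lam (j + m) * ∫ y, φ (j + m) y ^ 2 ∂μ :=
        le_tsum_of_hasSum_gram m hlam hanti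
          (hasSum_gram_of_mercer hlam hMercer hφ hsum hψ hψorth hψeig)
          (fun j => sum_sq_integral_mul_le_integral_sq (hφ j) hψ hψorth _)
          hsum
    _ ≤ ∑' j, C ^ 2 * g (j + m) :=
        Summable.tsum_le_tsum (fun j => hbound (j + m)) ((summable_nat_add_iff m).mpr hsum)
          ((summable_nat_add_iff m).mpr (hg.mul_left _))
    _ ≤ C ^ 2 * (2 ^ a / b ^ (a + 1) * ∫ u in Ioi (b * m), u ^ a * exp (-u)) := by
        rw [tsum_mul_left]
        refine mul_le_mul_of_nonneg_left (Real.tsum_le_of_sum_range_le (fun _ => by positivity)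
          fun n => ?_) (sq_nonneg C)
        simpa [g] using sum_range_rpow_mul_exp_neg_le ha hb hm n
    _ = _ := by ring

end Decay

theorem mul_rpow_mul_exp_neg_div_le {a b c x : ℝ} (hc : 0 ≤ c) (hb : 0 < b) (hx : 0 < x)
    (h : 2 * a ≤ b * x) :
    c * (b * x) ^ (a + 1) * exp (-(b * x)) / (b ^ (a + 1) * (b * x - a)) ≤
      c * (2 / b) * x ^ a * exp (-(b * x)) := by
  have hden : 0 < b * x - a := by nlinarith
  have hx_le : x ≤ 2 / b * (b * x - a) := by
    rw [div_mul_eq_mul_div, le_div_iff₀ hb]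
    linarith
  rw [mul_rpow hb.le hx.le, rpow_add hx, rpow_one, div_le_iff₀ (by positivity)]
  calc c * (b ^ (a + 1) * (x ^ a * x)) * exp (-(b * x))
      = c * b ^ (a + 1) * x ^ a * exp (-(b * x)) * x := by ring
    _ ≤ c * b ^ (a + 1) * x ^ a * exp (-(b * x)) * (2 / b * (b * x - a)) := by gcongr
    _ = _ := by ring

-- 0-based indexing: `lam j`, `φ j`, `lamρ j` are the paper's `λ_{j+1}`, `φ_{j+1}`, `λ_{j+1,ρ}`.
theorem eigenvalue_decay_unknown_measure_general
    {d : ℕ}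
    {X : Set (EuclideanSpace ℝ (Fin d))} (hXcomp : IsCompact X)
    (ρm : Measure (EuclideanSpace ℝ (Fin d)))
    [IsProbabilityMeasure ρm]
    (hρX : ρm X = 1)
    (K : EuclideanSpace ℝ (Fin d) → EuclideanSpace ℝ (Fin d) → ℝ)
    (lam : ℕ → ℝ) (φ : ℕ → EuclideanSpace ℝ (Fin d) → ℝ)
    (hlam_pos : ∀ m, 0 < lam m)
    (hφcont : ∀ m, Continuous (φ m))
    (hMercer : ∀ x y, HasSum (fun m => lam m * φ m x * φ m y) (K x y))
    (lamρ : ℕ → ℝ) (ψ : ℕ → EuclideanSpace ℝ (Fin d) → ℝ)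
    (hlamρ_anti : Antitone lamρ)
    (hψcont : ∀ m, Continuous (ψ m))
    (hψorth : ∀ i j, ∫ y, ψ i y * ψ j y ∂ρm = if i = j then 1 else 0)
    (hψeig : ∀ m x, ∫ y, K x y * ψ m y ∂ρm = lamρ m * ψ m x)
    (C a b : ℝ) (hC : 0 < C) (ha : 0 ≤ a) (hb : 0 < b)
    (hlam_decay : ∀ j : ℕ, lam j ≤ C * Real.exp (-b * ((j : ℝ) + 1)))
    (hφρ : ∀ j : ℕ, (∫ y, (φ j y) ^ 2 ∂ρm) ≤ C * ((j : ℝ) + 1) ^ a) :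
    (∃ C' : ℝ, 0 < C' ∧ ∀ m : ℕ, a < b * m →
      (lamρ m ≤ C' * (1 / b ^ (a + 1)) * ∫ u in Set.Ioi (b * m), u ^ a * Real.exp (-u)) ∧
      (C' * (1 / b ^ (a + 1)) * (∫ u in Set.Ioi (b * m), u ^ a * Real.exp (-u)) ≤
        C' * (b * m) ^ (a + 1) * Real.exp (-(b * m)) / (b ^ (a + 1) * (b * m - a)))) ∧
    (∃ C'' : ℝ, 0 < C'' ∧ ∃ M : ℕ, ∀ m : ℕ, M ≤ m →
      lamρ m ≤ C'' * (m : ℝ) ^ a * Real.exp (-(b * m))) := by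
  have hX : ∀ᵐ x ∂ρm, x ∈ X := (mem_ae_iff_prob_eq_one hXcomp.isClosed.measurableSet).mpr hρX
  have hC' : 0 < C ^ 2 * 2 ^ a := by positivity
  have hbound (m : ℕ) (hm : a < b * m) :
      lamρ m ≤ C ^ 2 * 2 ^ a * (1 / b ^ (a + 1)) * ∫ u in Ioi (b * m), u ^ a * exp (-u) := by
    rw [mul_one_div]
    exact eigenvalue_le_integral_Ioi_of_decay (fun j => (hlam_pos j).le) hMercer
      (fun j => (hφcont j).memLp_of_ae_mem_compact hXcomp hX 2)
      (fun i => (hψcont i).memLp_of_ae_mem_compact hXcomp hX 2) hψorth hψeig hlamρ_anti ha hb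
      hlam_decay hφρ (Nat.cast_pos.mp (pos_of_mul_pos_right (ha.trans_lt hm) hb.le))
  have htail (m : ℕ) (hm : a < b * m) := mul_integral_Ioi_rpow_mul_exp_neg_le hC'.le ha hb hm
  refine ⟨⟨_, hC', fun m hm => ⟨hbound m hm, htail m hm⟩⟩,
    C ^ 2 * 2 ^ a * (2 / b), by positivity, ⌈2 * a / b⌉₊ + 1, fun m hm => ?_⟩
  have hm2 : 2 * a < b * m := (div_lt_iff₀' hb).mp (Nat.lt_of_ceil_lt hm)
  have hm0 : (0 : ℝ) < m := pos_of_mul_pos_right (by linarith) hb.le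
  exact (hbound m (by linarith)).trans ((htail m (by linarith)).trans
    (mul_rpow_mul_exp_neg_div_le hC'.le hb hm0 hm2.le))

/-- (The bound (3.4) and its consequence.)  0-based indexing: `lam j`,
`φ j`, `lamρ j` stand for the paper's `λ_{j+1}`, `φ_{j+1}`, `λ_{j+1,ρ}`; the decay
assumptions `λ_j ≤ C e^{−bj}` and `‖φ_j‖²_ρ ≤ C j^a` (for `j ≥ 1`) become
`lam j ≤ C·exp(−b(j+1))` and `‖φ j‖²_ρ ≤ C (j+1)^a`.  Then there is `C' > 0` such
that for every `m` with `b·m > a`, the paper's `λ_{m+1,ρ}` (i.e. `lamρ m`) satisfies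
`lamρ m ≤ C'·(1/b^{a+1})·Γ(a+1, b·m)` and
`C'·(1/b^{a+1})·Γ(a+1, b·m) ≤ C'·(b m)^{a+1} e^{−bm}/(b^{a+1}(bm−a))`, where
`Γ(s,x) = ∫_x^∞ u^{s−1} e^{−u} du`; in particular `lamρ m ≤ C'' m^a e^{−bm}` for some
`C'' > 0` and all sufficiently large `m`. -/
theorem eigenvalue_decay_unknown_measure
    {d : ℕ} (hd : 1 ≤ d)
    {X : Set (EuclideanSpace ℝ (Fin d))} (hXcomp : IsCompact X) (hXne : X.Nonempty)
    (P ρm : Measure (EuclideanSpace ℝ (Fin d)))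
    [IsProbabilityMeasure P] [IsProbabilityMeasure ρm]
    (hPX : P X = 1) (hρX : ρm X = 1)
    (K : EuclideanSpace ℝ (Fin d) → EuclideanSpace ℝ (Fin d) → ℝ)
    (hKcont : Continuous fun p : EuclideanSpace ℝ (Fin d) × EuclideanSpace ℝ (Fin d) => K p.1 p.2)
    (hKsymm : ∀ x y, K x y = K y x)
    (lam : ℕ → ℝ) (φ : ℕ → EuclideanSpace ℝ (Fin d) → ℝ)
    (hlam_pos : ∀ m, 0 < lam m) (hlam_anti : Antitone lam)
    (hφcont : ∀ m, Continuous (φ m))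
    (hφorth : ∀ i j, ∫ y, φ i y * φ j y ∂P = if i = j then 1 else 0)
    (hφcomplete : ∀ f : EuclideanSpace ℝ (Fin d) → ℝ, MemLp f 2 P →
      (∀ m, ∫ y, f y * φ m y ∂P = 0) → f =ᵐ[P] 0)
    (hMercer : ∀ x y, HasSum (fun m => lam m * φ m x * φ m y) (K x y))
    (hac : ρm ≪ P)
    (hrnBdd : ∃ M : ℝ, ∀ᵐ x ∂P, (ρm.rnDeriv P x).toReal ≤ M)
    (lamρ : ℕ → ℝ) (ψ : ℕ → EuclideanSpace ℝ (Fin d) → ℝ)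
    (hlamρ_nonneg : ∀ m, 0 ≤ lamρ m) (hlamρ_anti : Antitone lamρ)
    (hψcont : ∀ m, Continuous (ψ m))
    (hψorth : ∀ i j, ∫ y, ψ i y * ψ j y ∂ρm = if i = j then 1 else 0)
    (hψeig : ∀ m x, ∫ y, K x y * ψ m y ∂ρm = lamρ m * ψ m x)
    (hψcomplete : ∀ f : EuclideanSpace ℝ (Fin d) → ℝ, MemLp f 2 ρm →
      (∀ m, ∫ y, f y * ψ m y ∂ρm = 0) → ∀ x, ∫ y, K x y * f y ∂ρm = 0)
    (C a b : ℝ) (hC : 0 < C) (ha : 0 ≤ a) (hb : 0 < b)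
    (hlam_decay : ∀ j : ℕ, lam j ≤ C * Real.exp (-b * ((j : ℝ) + 1)))
    (hφρ : ∀ j : ℕ, (∫ y, (φ j y) ^ 2 ∂ρm) ≤ C * ((j : ℝ) + 1) ^ a) :
    (∃ C' : ℝ, 0 < C' ∧ ∀ m : ℕ, a < b * m →
      (lamρ m ≤ C' * (1 / b ^ (a + 1)) * ∫ u in Set.Ioi (b * m), u ^ a * Real.exp (-u)) ∧
      (C' * (1 / b ^ (a + 1)) * (∫ u in Set.Ioi (b * m), u ^ a * Real.exp (-u)) ≤
        C' * (b * m) ^ (a + 1) * Real.exp (-(b * m)) / (b ^ (a + 1) * (b * m - a)))) ∧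
    (∃ C'' : ℝ, 0 < C'' ∧ ∃ M : ℕ, ∀ m : ℕ, M ≤ m →
      lamρ m ≤ C'' * (m : ℝ) ^ a * Real.exp (-(b * m))) :=
  eigenvalue_decay_unknown_measure_general hXcomp ρm hρX K lam φ hlam_pos hφcont hMercer lamρ ψ
    hlamρ_anti hψcont hψorth hψeig C a b hC ha hb hlam_decay hφρ
end

section
/- For every real n × N matrix A and every λ > 0, the spectral norm of the matrix (A(AᵀA + λI_N)^{-1}Aᵀ − I_n)A satisfies ‖(A(AᵀA + λI_N)^{-1}Aᵀ − I_n)A‖₂² ≤ λ/4; equivalently, if μ_1 ≥ ⋯ ≥ μ_N ≥ 0 are the singular values of A, then max_{1≤j≤N} λ² μ_j² / (μ_j² + λ)² ≤ λ/4. -/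
/-!
With `S = AᵀA + λI`, which is positive definite, the residual matrix collapses to
`(AS⁻¹Aᵀ − I)A = −λAS⁻¹`. Writing `v = Sw`, the bound becomes
`λ²⟨w, AᵀAw⟩ ≤ (λ/4)‖AᵀAw + λw‖²`, and the difference of the two sides is `(λ/4)‖AᵀAw − λw‖²`.
The singular-value form is the same AM-GM step for scalars: `(μ² + λ)² ≥ 4λμ²`.
-/

open Matrix

theorem four_mul_dotProduct_le_dotProduct_add_smul {ι : Type*} [Fintype ι] (x w : ι → ℝ)
    (c : ℝ) : 4 * c * (w ⬝ᵥ x) ≤ (x + c • w) ⬝ᵥ (x + c • w) := by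
  have h : 0 ≤ (x - c • w) ⬝ᵥ (x - c • w) := Finset.sum_nonneg fun i _ => mul_self_nonneg _
  simp only [dotProduct_add, add_dotProduct, dotProduct_sub, sub_dotProduct, dotProduct_smul,
    smul_dotProduct, smul_eq_mul, dotProduct_comm x w] at h ⊢
  linarith

theorem sq_mul_div_sq_add_le (s : ℝ) {c : ℝ} (hc : 0 ≤ c) : c ^ 2 * s / (s + c) ^ 2 ≤ c / 4 := by
  rcases eq_or_ne (s + c) 0 with h | h
  · simp [h]; positivity
  rw [div_le_iff₀ (by positivity)]
  nlinarith [mul_nonneg hc (sq_nonneg (s - c))]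

namespace Matrix

variable {m n : Type*} [Fintype m] [Fintype n] [DecidableEq n]

theorem sub_one_mul_eq_neg_smul_mul_inv [DecidableEq m] {R : Type*} [CommRing R]
    (A : Matrix m n R) (c : R) (hS : IsUnit (Aᵀ * A + c • 1).det) :
    (A * (Aᵀ * A + c • 1)⁻¹ * Aᵀ - 1) * A = -(c • (A * (Aᵀ * A + c • 1)⁻¹)) := by
  set S := Aᵀ * A + c • 1 with hS_def
  have hAA : Aᵀ * A = S - c • 1 := by rw [hS_def]; abel
  rw [Matrix.sub_mul, Matrix.one_mul, Matrix.mul_assoc _ Aᵀ, hAA, Matrix.mul_sub,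
    Matrix.mul_assoc A, nonsing_inv_mul _ hS, Matrix.mul_smul, Matrix.mul_one, Matrix.mul_one]
  abel

theorem transpose_mul_self_add_smul_one_posDef (A : Matrix m n ℝ) {c : ℝ} (hc : 0 < c) :
    (Aᵀ * A + c • 1).PosDef :=
  PosDef.posSemidef_add (posSemidef_conjTranspose_mul_self A) (PosDef.one.smul hc)

theorem sum_sq_sub_one_mul_mulVec_le [DecidableEq m] (A : Matrix m n ℝ) {c : ℝ} (hc : 0 < c)
    (v : n → ℝ) :
    ∑ i, (((A * (Aᵀ * A + c • (1 : Matrix n n ℝ))⁻¹ * Aᵀ - 1) * A) *ᵥ v) i ^ 2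
      ≤ c / 4 * ∑ j, v j ^ 2 := by
  set S := Aᵀ * A + c • (1 : Matrix n n ℝ) with hS_def
  have hS : IsUnit S.det := (A.transpose_mul_self_add_smul_one_posDef hc).det_pos.ne'.isUnit
  obtain ⟨w, rfl⟩ : ∃ w, v = S *ᵥ w :=
    ⟨S⁻¹ *ᵥ v, by rw [mulVec_mulVec, mul_nonsing_inv _ hS, one_mulVec]⟩
  have hMw : ((A * S⁻¹ * Aᵀ - 1) * A) *ᵥ S *ᵥ w = -(c • A *ᵥ w) := by
    rw [sub_one_mul_eq_neg_smul_mul_inv A c hS, ← hS_def, mulVec_mulVec, Matrix.neg_mul,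
      Matrix.smul_mul, Matrix.mul_assoc, nonsing_inv_mul _ hS, Matrix.mul_one, neg_mulVec,
      smul_mulVec]
  have hSw : S *ᵥ w = (Aᵀ * A) *ᵥ w + c • w := by
    rw [hS_def, add_mulVec, smul_mulVec, one_mulVec]
  have hAw : A *ᵥ w ⬝ᵥ A *ᵥ w = w ⬝ᵥ (Aᵀ * A) *ᵥ w := by
    rw [← mulVec_mulVec, dotProduct_mulVec, ← mulVec_transpose, dotProduct_comm]
  simp only [sq, ← dotProduct.eq_1]
  rw [hMw, neg_dotProduct_neg, smul_dotProduct, dotProduct_smul, hAw, hSw]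
  calc c * (c * (w ⬝ᵥ (Aᵀ * A) *ᵥ w)) = c / 4 * (4 * c * (w ⬝ᵥ (Aᵀ * A) *ᵥ w)) := by ring
    _ ≤ _ := mul_le_mul_of_nonneg_left
      (four_mul_dotProduct_le_dotProduct_add_smul _ _ _) (by positivity)

end Matrix

theorem residual_matrix_spectral_norm_bound_general
    (n N : ℕ) (A : Matrix (Fin n) (Fin N) ℝ) (lamb : ℝ) (hlamb : 0 < lamb)
    (μs : Fin N → ℝ) :
    (∀ v : Fin N → ℝ,
      (∑ i, (((A * (Aᵀ * A + lamb • (1 : Matrix (Fin N) (Fin N) ℝ))⁻¹ * Aᵀ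
          - (1 : Matrix (Fin n) (Fin n) ℝ)) * A).mulVec v i) ^ 2)
        ≤ (lamb / 4) * ∑ j, (v j) ^ 2) ∧
    (∀ j : Fin N, lamb ^ 2 * (μs j) ^ 2 / ((μs j) ^ 2 + lamb) ^ 2 ≤ lamb / 4) :=
  ⟨A.sum_sq_sub_one_mul_mulVec_le hlamb, fun _ => sq_mul_div_sq_add_le _ hlamb.le⟩

/-- (The bound (4.15).)  For every real `n × N` matrix `A` and `λ > 0`,
the spectral norm of `(A(AᵀA + λI_N)⁻¹Aᵀ − I_n)A` squared is at most `λ/4`, expressed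
through the operator characterization `Σ_i (Mv)_i² ≤ (λ/4) Σ_j v_j²`; equivalently, if
`μ_1 ≥ ⋯ ≥ μ_N ≥ 0` are the singular values of `A` (`μs j ≥ 0` with `(μs j)²` the
eigenvalues of `AᵀA`), then `λ² μ_j²/(μ_j² + λ)² ≤ λ/4` for every `j`. -/
theorem residual_matrix_spectral_norm_bound
    (n N : ℕ) (A : Matrix (Fin n) (Fin N) ℝ) (lamb : ℝ) (hlamb : 0 < lamb)
    (μs : Fin N → ℝ)
    (hμs_nonneg : ∀ j, 0 ≤ μs j)
    (hμs_sorted : ∀ i j : Fin N, i ≤ j → μs j ≤ μs i)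
    (hμs : ∃ hH : (Aᵀ * A).IsHermitian, ∃ e : Equiv.Perm (Fin N),
      ∀ j, (μs j) ^ 2 = hH.eigenvalues (e j)) :
    (∀ v : Fin N → ℝ,
      (∑ i, (((A * (Aᵀ * A + lamb • (1 : Matrix (Fin N) (Fin N) ℝ))⁻¹ * Aᵀ
          - (1 : Matrix (Fin n) (Fin n) ℝ)) * A).mulVec v i) ^ 2)
        ≤ (lamb / 4) * ∑ j, (v j) ^ 2) ∧
    (∀ j : Fin N, lamb ^ 2 * (μs j) ^ 2 / ((μs j) ^ 2 + lamb) ^ 2 ≤ lamb / 4) :=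
  residual_matrix_spectral_norm_bound_general n N A lamb hlamb μs
end
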